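/- For ontology-mediated queries Q = (T, q) in which T contains no role-inclusion axioms (no axioms of the form ρ(x,y) → ρ'(x,y)), the number of tree witnesses for Q is at most 3|q|. -/

import Mathlib

/-- A role: a binary predicate together with a direction (`true` = the predicate itself,
`false` = its inverse). -/
abbrev DLRole (BP : Type) := BP × Bool

/-- The inverse of a role. -/
def DLRole.inv {BP : Type} (ρ : DLRole BP) : DLRole BP := (ρ.1, !ρ.2)

/-- OWL 2 QL concepts: `⊤`, unary predicates `A(x)`, and `∃y ρ(x,y)`. -/
inductive DLConcept (UP BP : Type) where
  | top : DLConcept UP BP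
  | atm : UP → DLConcept UP BP
  | ex : DLRole BP → DLConcept UP BP

/-- (The positive part of) an OWL 2 QL ontology: concept inclusions `τ(x) → τ'(x)`, role
inclusions `ρ(x,y) → ρ'(x,y)` and reflexivity axioms `∀x ρ(x,x)`. -/
structure DLOnt (UP BP : Type) where
  ci : Set (DLConcept UP BP × DLConcept UP BP)
  ri : Set (DLRole BP × DLRole BP)
  refl : Set (DLRole BP)

/-- A first-order interpretation of the signature. -/
structure DLInterp (UP BP : Type) where
  Dom : Type
  iu : UP → Set Dom
  ib : BP → Set (Dom × Dom)

/-- The extension of a role in an interpretation. -/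
def DLInterp.role {UP BP : Type} (I : DLInterp UP BP) (ρ : DLRole BP) :
    Set (I.Dom × I.Dom) :=
  if ρ.2 then I.ib ρ.1 else {p | (p.2, p.1) ∈ I.ib ρ.1}

/-- The extension of a concept in an interpretation. -/
def DLInterp.conc {UP BP : Type} (I : DLInterp UP BP) : DLConcept UP BP → Set I.Dom
  | .top => Set.univ
  | .atm A => I.iu A
  | .ex ρ => {d | ∃ d', (d, d') ∈ I.role ρ}

/-- An interpretation is a model of an ontology. -/
def DLInterp.IsModel {UP BP : Type} (I : DLInterp UP BP) (T : DLOnt UP BP) : Prop :=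
  (∀ p ∈ T.ci, I.conc p.1 ⊆ I.conc p.2) ∧
  (∀ p ∈ T.ri, I.role p.1 ⊆ I.role p.2) ∧
  (∀ ρ ∈ T.refl, ∀ d : I.Dom, (d, d) ∈ I.role ρ)

/-- `T ⊨ τ(x) → τ'(x)`. -/
def DLOnt.Sub {UP BP : Type} (T : DLOnt UP BP) (c d : DLConcept UP BP) : Prop :=
  ∀ I : DLInterp UP BP, I.IsModel T → I.conc c ⊆ I.conc d

/-- `T ⊨ ρ(x,y) → σ(x,y)`. -/
def DLOnt.RSub {UP BP : Type} (T : DLOnt UP BP) (ρ σ : DLRole BP) : Prop :=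
  ∀ I : DLInterp UP BP, I.IsModel T → I.role ρ ⊆ I.role σ

/-- `T ⊨ ∀x ρ(x,x)`. -/
def DLOnt.ReflE {UP BP : Type} (T : DLOnt UP BP) (ρ : DLRole BP) : Prop :=
  ∀ I : DLInterp UP BP, I.IsModel T → ∀ d : I.Dom, (d, d) ∈ I.role ρ

/-- `T ⊨ τ(x) → ρ(x,x)`. -/
def DLOnt.Loop {UP BP : Type} (T : DLOnt UP BP) (τ : DLConcept UP BP)
    (ρ : DLRole BP) : Prop :=
  ∀ I : DLInterp UP BP, I.IsModel T → ∀ d ∈ I.conc τ, (d, d) ∈ I.role ρ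

/-- The labelled nulls of the canonical model `C_T^{τ(a)}`: words `ρ₁ ⋯ ρₙ` such that
`T ⊨ τ(x) → ∃y ρ₁(x,y)` but `T, τ(a) ⊭ ρ₁(a,a)`, no `ρᵢ` is entailed reflexive, and
`T ⊨ (∃x ρᵢ(x,y)) → ∃z ρᵢ₊₁(y,z)` but `T ⊭ ρᵢ(y,x) → ρᵢ₊₁(x,y)`.  The empty word denotes
the individual `a`. -/
def GenWord {UP BP : Type} (T : DLOnt UP BP) (τ : DLConcept UP BP)
    (w : List (DLRole BP)) : Prop :=
  (∀ ρ ∈ w, ¬ T.ReflE ρ) ∧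
  (∀ ρ rest, w = ρ :: rest → T.Sub τ (.ex ρ) ∧ ¬ T.Loop τ ρ) ∧
  (∀ i : ℕ, ∀ h : i + 1 < w.length,
      T.Sub (.ex (DLRole.inv (w.get ⟨i, Nat.lt_of_succ_lt h⟩))) (.ex (w.get ⟨i + 1, h⟩)) ∧
      ¬ T.RSub (DLRole.inv (w.get ⟨i, Nat.lt_of_succ_lt h⟩)) (w.get ⟨i + 1, h⟩))

/-- Membership of an element of `C_T^{τ(a)}` in a unary predicate. -/
def CMu {UP BP : Type} (T : DLOnt UP BP) (τ : DLConcept UP BP) (A : UP)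
    (w : List (DLRole BP)) : Prop :=
  (w = [] ∧ T.Sub τ (.atm A)) ∨
  (∃ w' ρ, w = w' ++ [ρ] ∧ T.Sub (.ex (DLRole.inv ρ)) (.atm A))

/-- Membership of a pair of elements of `C_T^{τ(a)}` in a binary predicate. -/
def CMb {UP BP : Type} (T : DLOnt UP BP) (τ : DLConcept UP BP) (P : BP)
    (u v : List (DLRole BP)) : Prop :=
  (u = [] ∧ v = [] ∧ T.Loop τ (P, true)) ∨
  (u = v ∧ T.ReflE (P, true)) ∨
  (∃ ρ, v = u ++ [ρ] ∧ T.RSub ρ (P, true)) ∨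
  (∃ ρ, u = v ++ [ρ] ∧ T.RSub ρ (P, false))

/-- Atoms of a conjunctive query: `A(x)` and `P(x,y)`. -/
inductive QAtom (UP BP V : Type) where
  | ua : UP → V → QAtom UP BP V
  | ba : BP → V → V → QAtom UP BP V
deriving DecidableEq

/-- The variables of an atom. -/
def QAtom.vars {UP BP V : Type} [DecidableEq V] : QAtom UP BP V → Finset V
  | .ua _ x => {x}
  | .ba _ x y => {x, y}

/-- The variables of a CQ. -/
def qvars {UP BP V : Type} [DecidableEq V] (q : Finset (QAtom UP BP V)) : Finset V :=
  q.biUnion QAtom.vars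

/-- `q_t`: the atoms of `q` all of whose variables are in `t_r ∪ t_i` and at least one of
whose variables is in `t_i`. -/
def qtw {UP BP V : Type} [DecidableEq UP] [DecidableEq BP] [DecidableEq V]
    (q : Finset (QAtom UP BP V)) (tr ti : Finset V) : Finset (QAtom UP BP V) :=
  q.filter fun a => a.vars ⊆ tr ∪ ti ∧ ¬ a.vars ⊆ tr

/-- `h` is a homomorphism from the set `S` of atoms to the canonical model `C_T^{τ(a)}`. -/
def HomOn {UP BP V : Type} [DecidableEq V] (T : DLOnt UP BP) (τ : DLConcept UP BP)
    (S : Finset (QAtom UP BP V)) (h : V → List (DLRole BP)) : Prop :=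
  (∀ v ∈ qvars S, GenWord T τ (h v)) ∧
  (∀ a ∈ S,
    (∀ A x, a = QAtom.ua A x → CMu T τ A (h x)) ∧
    (∀ P x y, a = QAtom.ba P x y → CMb T τ P (h x) (h y)))

/-- `(t_r, t_i)` is a candidate tree witness for the OMQ `(T, q)` with answer variables
`ans`: disjoint sets of variables of `q`, `t_i` nonempty and without answer variables,
`q_t` contains every atom of `q` with a variable in `t_i`, and there is a concept `τ` and a
homomorphism `h : q_t → C_T^{τ(a)}` with `t_r = h⁻¹(a)`. -/
def IsPreTW {UP BP V : Type} [DecidableEq UP] [DecidableEq BP] [DecidableEq V]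
    (T : DLOnt UP BP) (q : Finset (QAtom UP BP V)) (ans : Finset V)
    (tr ti : Finset V) : Prop :=
  Disjoint tr ti ∧ ti.Nonempty ∧ Disjoint ti ans ∧ tr ∪ ti ⊆ qvars q ∧
  (∀ a ∈ q, ¬ Disjoint a.vars ti → a ∈ qtw q tr ti) ∧
  ∃ (τ : DLConcept UP BP) (h : V → List (DLRole BP)),
    HomOn T τ (qtw q tr ti) h ∧
    tr ⊆ qvars (qtw q tr ti) ∧
    (∀ v ∈ qvars (qtw q tr ti), (h v = [] ↔ v ∈ tr))

/-- A tree witness: a candidate tree witness whose `q_t` is minimal (no candidate tree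
witness has a strictly smaller set of internal variables). -/
def IsTW {UP BP V : Type} [DecidableEq UP] [DecidableEq BP] [DecidableEq V]
    (T : DLOnt UP BP) (q : Finset (QAtom UP BP V)) (ans : Finset V)
    (tr ti : Finset V) : Prop :=
  IsPreTW T q ans tr ti ∧
  ∀ tr' ti' : Finset V, IsPreTW T q ans tr' ti' → ti' ⊆ ti → ti' = ti

/-- The ontology `T` is of depth `k`: no role is entailed reflexive, some canonical model
`C_T^{τ(a)}` contains a word of length `k`, and none contains a longer word. -/
def HasDepth {UP BP : Type} (T : DLOnt UP BP) (k : ℕ) : Prop :=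
  (∀ ρ : DLRole BP, ¬ T.ReflE ρ) ∧
  (∃ (τ : DLConcept UP BP) (w : List (DLRole BP)), GenWord T τ w ∧ w.length = k) ∧
  (∀ (τ : DLConcept UP BP) (w : List (DLRole BP)), GenWord T τ w → w.length ≤ k)

/-!
Without role inclusions a role entails only itself, so every point of a canonical model
`C_T^{τ(a)}` has at most one `ρ`-successor, and which one it is does not depend on `τ`
(`canonSucc`). Consequently, if the homomorphisms of two tree witnesses agree on one common
internal variable, they agree on everything reachable from it inside both witnesses, and this
common part is itself a candidate tree witness; minimality makes the two witnesses equal. A root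
variable is sent to the individual, so two witnesses entered through the same atom in the same
direction agree on the internal end of that atom; two detached witnesses meeting the same atom
share its variables. Hence a tree witness is determined by an atom of `q` together with one of
three tags, which gives the bound `3|q|`.
-/

variable {UP BP : Type}

namespace DLOnt

variable {T : DLOnt UP BP}

/-- Countermodel: the two-element interpretation in which every predicate is reflexive and only
`ρ` has one extra edge. -/
theorem eq_of_rSub (hri : T.ri = ∅) {ρ σ : DLRole BP} (h : T.RSub ρ σ) : ρ = σ := by
  let I : DLInterp UP BP :=
    ⟨Bool, fun _ => Set.univ, fun R => {p | p.1 = p.2 ∨ (R = ρ.1 ∧ p = (!ρ.2, ρ.2))}⟩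
  have hdiag : ∀ (σ : DLRole BP) (d : Bool), (d, d) ∈ I.role σ := by
    intro σ d; unfold DLInterp.role; split <;> simp [I]
  have hI : I.IsModel T := by
    refine ⟨fun p _ d _ => ?_, by simp [hri], fun ρ _ d => hdiag ρ d⟩
    rcases p with ⟨_, _ | _ | σ⟩
    exacts [trivial, trivial, ⟨d, hdiag σ d⟩]
  have hρ : (false, true) ∈ I.role ρ := by
    obtain ⟨P, _ | _⟩ := ρ <;> simp [DLInterp.role, I]
  have hσ := h I hI hρ
  obtain ⟨P, _ | _⟩ := ρ <;> obtain ⟨R, _ | _⟩ := σ <;> simp_all [DLInterp.role, I]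

theorem rSub_refl (ρ : DLRole BP) : T.RSub ρ ρ := fun _ _ => subset_rfl

@[simp]
theorem reflE_inv_iff {ρ : DLRole BP} : T.ReflE ρ.inv ↔ T.ReflE ρ := by
  obtain ⟨P, _ | _⟩ := ρ <;> simp [ReflE, DLInterp.role, DLRole.inv]

end DLOnt

@[simp]
theorem DLRole.inv_inv (ρ : DLRole BP) : ρ.inv.inv = ρ := by
  simp [DLRole.inv]

section CanonicalModel

variable {T : DLOnt UP BP} {τ : DLConcept UP BP}

theorem GenWord.not_rSub_of_append {w : List (DLRole BP)} {ρ σ : DLRole BP}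
    (h : GenWord T τ (w ++ [ρ, σ])) : ¬ T.RSub ρ.inv σ := by
  have hlen : w.length + 1 < (w ++ [ρ, σ]).length := by simp
  simpa [List.getElem_append_right] using (h.2.2 w.length hlen).2

/-- `ρ(u, v)` holds in `C_T^{τ(a)}`; `CMb` covers only the roles `ρ = P`. -/
def CMr (T : DLOnt UP BP) (τ : DLConcept UP BP) (ρ : DLRole BP) (u v : List (DLRole BP)) :
    Prop :=
  if ρ.2 then CMb T τ ρ.1 u v else CMb T τ ρ.1 v u

theorem CMr.cases (hri : T.ri = ∅) {ρ : DLRole BP} {u v : List (DLRole BP)}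
    (h : CMr T τ ρ u v) (huv : u ≠ [] ∨ v ≠ []) :
    (v = u ∧ T.ReflE ρ) ∨ v = u ++ [ρ] ∨ u = v ++ [ρ.inv] := by
  obtain ⟨P, _ | _⟩ := ρ <;>
    rcases h with ⟨rfl, rfl, -⟩ | ⟨rfl, h⟩ | ⟨σ, rfl, h⟩ | ⟨σ, rfl, h⟩ <;>
    first
    | exact Or.inl ⟨rfl, h⟩
    | exact Or.inl ⟨rfl, DLOnt.reflE_inv_iff.2 h⟩
    | obtain rfl := DLOnt.eq_of_rSub hri h; simp [DLRole.inv]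
    | simp at huv

open Classical in
/-- The `ρ`-successor of `u` in every canonical model `C_T^{τ(a)}`: `u` itself if `ρ` is
reflexive, the parent of `u` if `u` was reached along `ρ⁻`, and the child `uρ` otherwise. -/
noncomputable def canonSucc (T : DLOnt UP BP) (ρ : DLRole BP) (u : List (DLRole BP)) :
    List (DLRole BP) :=
  if T.ReflE ρ then u else if u.getLast? = some ρ.inv then u.dropLast else u ++ [ρ]

theorem CMr.eq_canonSucc (hri : T.ri = ∅) {ρ : DLRole BP} {u v : List (DLRole BP)}
    (hu : GenWord T τ u) (hv : GenWord T τ v) (h : CMr T τ ρ u v)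
    (huv : u ≠ [] ∨ v ≠ []) :
    v = canonSucc T ρ u := by
  rcases h.cases hri huv with ⟨rfl, hρ⟩ | rfl | rfl
  · simp [canonSucc, hρ]
  · have hρ : ¬ T.ReflE ρ := hv.1 ρ (by simp)
    have hlast : u.getLast? ≠ some ρ.inv := by
      rintro hl
      obtain ⟨w, rfl⟩ := List.getLast?_eq_some_iff.1 hl
      have hw : GenWord T τ (w ++ [ρ.inv, ρ]) := by simpa using hv
      exact hw.not_rSub_of_append (by simpa using DLOnt.rSub_refl (T := T) ρ)
    simp [canonSucc, hρ, hlast]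
  · have hρ : ¬ T.ReflE ρ := by
      rw [← DLOnt.reflE_inv_iff]; exact hu.1 _ (by simp)
    simp [canonSucc, hρ]

end CanonicalModel

section Query

variable {V : Type}

/-- `a` is the atom `ρ(x, y)`, i.e. `P(x, y)` for `ρ = P` and `P(y, x)` for `ρ = P⁻`. -/
def QAtom.Joins (a : QAtom UP BP V) (ρ : DLRole BP) (x y : V) : Prop :=
  if ρ.2 then a = .ba ρ.1 x y else a = .ba ρ.1 y x

theorem QAtom.Joins.unique {a : QAtom UP BP V} {P P' : BP} {b : Bool} {x y x' y' : V}
    (h : a.Joins (P, b) x y) (h' : a.Joins (P', b) x' y') : P = P' ∧ x = x' ∧ y = y' := by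
  cases b <;> simp_all [Joins]

variable [DecidableEq V] {T : DLOnt UP BP} {τ : DLConcept UP BP} {h : V → List (DLRole BP)}
  {S S' : Finset (QAtom UP BP V)}

theorem QAtom.Joins.mem_vars {a : QAtom UP BP V} {ρ : DLRole BP} {x y : V}
    (h : a.Joins ρ x y) : x ∈ a.vars ∧ y ∈ a.vars := by
  obtain ⟨P, _ | _⟩ := ρ <;> simp_all [Joins, QAtom.vars]

theorem QAtom.exists_joins {a : QAtom UP BP V} {x y : V} (hx : x ∈ a.vars)
    (hy : y ∈ a.vars) (hxy : x ≠ y) : ∃ ρ, a.Joins ρ x y := by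
  cases a with
  | ua A z => simp_all [QAtom.vars]
  | ba P z w =>
    simp only [QAtom.vars, Finset.mem_insert, Finset.mem_singleton] at hx hy
    rcases hx with rfl | rfl <;> rcases hy with rfl | rfl
    exacts [absurd rfl hxy, ⟨(P, true), by simp [Joins]⟩, ⟨(P, false), by simp [Joins]⟩,
      absurd rfl hxy]

theorem HomOn.cmr (hh : HomOn T τ S h) {a : QAtom UP BP V} (ha : a ∈ S)
    {ρ : DLRole BP} {x y : V} (hj : a.Joins ρ x y) : CMr T τ ρ (h x) (h y) := by
  obtain ⟨P, _ | _⟩ := ρ <;> simp only [QAtom.Joins, CMr] at hj ⊢ <;> subst hj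
  · exact (hh.2 _ ha).2 P y x rfl
  · exact (hh.2 _ ha).2 P x y rfl

theorem mem_qvars {v : V} :
    v ∈ qvars S ↔ ∃ a ∈ S, v ∈ a.vars :=
  Finset.mem_biUnion

theorem qvars_mono (hS : S ⊆ S') : qvars S ⊆ qvars S' :=
  Finset.biUnion_subset_biUnion_of_subset_left _ hS

theorem HomOn.mono (hh : HomOn T τ S' h) (hS : S ⊆ S') : HomOn T τ S h :=
  ⟨fun v hv => hh.1 v (qvars_mono hS hv), fun a ha => hh.2 a (hS ha)⟩

theorem HomOn.eq_canonSucc (hri : T.ri = ∅) (hh : HomOn T τ S h)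
    {a : QAtom UP BP V} (ha : a ∈ S) {ρ : DLRole BP} {x y : V} (hj : a.Joins ρ x y)
    (hne : h x ≠ [] ∨ h y ≠ []) : h y = canonSucc T ρ (h x) :=
  (hh.cmr ha hj).eq_canonSucc hri (hh.1 x (mem_qvars.2 ⟨a, ha, hj.mem_vars.1⟩))
    (hh.1 y (mem_qvars.2 ⟨a, ha, hj.mem_vars.2⟩)) hne

/-- The root variables `t_r` of a tree witness with internal variables `s`. -/
def twRoots (q : Finset (QAtom UP BP V)) (s : Finset V) : Finset V :=
  qvars (q.filter fun a => ¬ Disjoint a.vars s) \ s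

theorem mem_twRoots {q : Finset (QAtom UP BP V)} {s : Finset V} {v : V} :
    v ∈ twRoots q s ↔ v ∉ s ∧ ∃ a ∈ q, ¬ Disjoint a.vars s ∧ v ∈ a.vars := by
  simp only [twRoots, Finset.mem_sdiff, mem_qvars, Finset.mem_filter]
  aesop

theorem vars_subset_twRoots_union {q : Finset (QAtom UP BP V)} {s : Finset V}
    {a : QAtom UP BP V} (ha : a ∈ q) (hmeet : ¬ Disjoint a.vars s) :
    a.vars ⊆ twRoots q s ∪ s := by
  intro v hv
  by_cases hvs : v ∈ s
  · exact Finset.mem_union_right _ hvs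
  · exact Finset.mem_union_left _ (mem_twRoots.2 ⟨hvs, a, ha, hmeet, hv⟩)

end Query

section TreeWitness

variable {V : Type} [DecidableEq UP] [DecidableEq BP] [DecidableEq V]
  {T : DLOnt UP BP} {q : Finset (QAtom UP BP V)} {ans tr ti : Finset V}

theorem mem_qtw {a : QAtom UP BP V} :
    a ∈ qtw q tr ti ↔ a ∈ q ∧ a.vars ⊆ tr ∪ ti ∧ ¬ a.vars ⊆ tr := by
  simp [qtw]

def IsTWHom (T : DLOnt UP BP) (q : Finset (QAtom UP BP V)) (tr ti : Finset V)
    (τ : DLConcept UP BP) (h : V → List (DLRole BP)) : Prop :=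
  HomOn T τ (qtw q tr ti) h ∧ ∀ v ∈ qvars (qtw q tr ti), (h v = [] ↔ v ∈ tr)

theorem IsPreTW.exists_isTWHom (pre : IsPreTW T q ans tr ti) :
    ∃ τ h, IsTWHom T q tr ti τ h := by
  obtain ⟨-, -, -, -, -, τ, h, hh, -, hrt⟩ := pre
  exact ⟨τ, h, hh, hrt⟩

theorem IsPreTW.mem_qtw_of_meets (pre : IsPreTW T q ans tr ti) {a : QAtom UP BP V} (ha : a ∈ q)
    {u : V} (hu : u ∈ a.vars) (huti : u ∈ ti) : a ∈ qtw q tr ti :=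
  pre.2.2.2.2.1 a ha (Finset.not_disjoint_iff.2 ⟨u, hu, huti⟩)

theorem IsPreTW.vars_subset (pre : IsPreTW T q ans tr ti) {a : QAtom UP BP V} (ha : a ∈ q)
    {u : V} (hu : u ∈ a.vars) (huti : u ∈ ti) : a.vars ⊆ tr ∪ ti :=
  (mem_qtw.1 (pre.mem_qtw_of_meets ha hu huti)).2.1

theorem IsTWHom.eq_nil_iff {τ : DLConcept UP BP} {h : V → List (DLRole BP)}
    (hh : IsTWHom T q tr ti τ h) {a : QAtom UP BP V} (ha : a ∈ qtw q tr ti) {v : V}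
    (hv : v ∈ a.vars) : h v = [] ↔ v ∈ tr :=
  hh.2 v (mem_qvars.2 ⟨a, ha, hv⟩)

theorem IsPreTW.mem_ti_iff (pre : IsPreTW T q ans tr ti) {τ : DLConcept UP BP}
    {h : V → List (DLRole BP)} (hh : IsTWHom T q tr ti τ h) {a : QAtom UP BP V} (ha : a ∈ q)
    {u : V} (hu : u ∈ a.vars) (huti : u ∈ ti) {v : V} (hv : v ∈ a.vars) :
    v ∈ ti ↔ h v ≠ [] := by
  rw [Ne, hh.eq_nil_iff (pre.mem_qtw_of_meets ha hu huti) hv]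
  have hv' := Finset.mem_union.1 (pre.vars_subset ha hu huti hv)
  exact ⟨fun hvti hvtr => Finset.disjoint_left.1 pre.1 hvtr hvti, hv'.resolve_left⟩

theorem IsPreTW.eq_twRoots (pre : IsPreTW T q ans tr ti) : tr = twRoots q ti := by
  obtain ⟨hdisj, -, -, -, hcl, τ, h, -, htr, -⟩ := pre
  ext v
  rw [mem_twRoots]
  constructor
  · intro hv
    obtain ⟨a, ha, hva⟩ := mem_qvars.1 (htr hv)
    obtain ⟨haq, hsub, hnsub⟩ := mem_qtw.1 ha
    obtain ⟨w, hw, hwtr⟩ := Finset.not_subset.1 hnsub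
    have hwti : w ∈ ti := by simpa [hwtr] using hsub hw
    exact ⟨Finset.disjoint_left.1 hdisj hv, a, haq, Finset.not_disjoint_iff.2 ⟨w, hw, hwti⟩,
      hva⟩
  · rintro ⟨hvti, a, ha, hmeet, hva⟩
    simpa [hvti] using (mem_qtw.1 (hcl a ha hmeet)).2.1 hva

theorem mem_qtw_twRoots {s : Finset V} {a : QAtom UP BP V} :
    a ∈ qtw q (twRoots q s) s ↔ a ∈ q ∧ ¬ Disjoint a.vars s := by
  rw [mem_qtw]
  constructor
  · rintro ⟨ha, hsub, hnsub⟩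
    obtain ⟨w, hw, hwr⟩ := Finset.not_subset.1 hnsub
    have hws : w ∈ s := by simpa [hwr] using hsub hw
    exact ⟨ha, Finset.not_disjoint_iff.2 ⟨w, hw, hws⟩⟩
  · rintro ⟨ha, hmeet⟩
    obtain ⟨w, hw, hws⟩ := Finset.not_disjoint_iff.1 hmeet
    exact ⟨ha, vars_subset_twRoots_union ha hmeet, fun hsub => (mem_twRoots.1 (hsub hw)).1 hws⟩

theorem IsPreTW.restrict (pre : IsPreTW T q ans tr ti) {s : Finset V} (hs : s ⊆ ti)
    (hne : s.Nonempty) (hcl : ∀ a ∈ q, ¬ Disjoint a.vars s → a.vars ⊆ tr ∪ s) :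
    IsPreTW T q ans (twRoots q s) s := by
  have hsub : qtw q (twRoots q s) s ⊆ qtw q tr ti := by
    intro a ha
    obtain ⟨haq, hmeet⟩ := mem_qtw_twRoots.1 ha
    obtain ⟨w, hw, hws⟩ := Finset.not_disjoint_iff.1 hmeet
    exact pre.mem_qtw_of_meets haq hw (hs hws)
  obtain ⟨hdisj, -, hans, hq, -, τ, h, hh, -, hrt⟩ := pre
  refine ⟨Finset.sdiff_disjoint, hne, Finset.disjoint_of_subset_left hs hans, ?_,
    fun a ha hmeet => mem_qtw_twRoots.2 ⟨ha, hmeet⟩, τ, h, hh.mono hsub, ?_, ?_⟩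
  · refine Finset.union_subset (fun v hv => ?_) (hs.trans (Finset.subset_union_right.trans hq))
    obtain ⟨-, a, ha, -, hva⟩ := mem_twRoots.1 hv
    exact mem_qvars.2 ⟨a, ha, hva⟩
  · intro v hv
    obtain ⟨-, a, ha, hmeet, hva⟩ := mem_twRoots.1 hv
    exact mem_qvars.2 ⟨a, mem_qtw_twRoots.2 ⟨ha, hmeet⟩, hva⟩
  · intro v hv
    obtain ⟨a, ha, hva⟩ := mem_qvars.1 hv
    obtain ⟨haq, hmeet⟩ := mem_qtw_twRoots.1 ha
    rw [hrt v (qvars_mono hsub hv), mem_twRoots]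
    have hv' := Finset.mem_union.1 (hcl a haq hmeet hva)
    exact ⟨fun hvtr => ⟨fun hvs => Finset.disjoint_left.1 hdisj hvtr (hs hvs), a, haq, hmeet,
      hva⟩, fun hvr => hv'.resolve_right hvr.1⟩

theorem IsTW.eq_of_subset (ht : IsTW T q ans tr ti) {s : Finset V} (hs : s ⊆ ti)
    (hne : s.Nonempty) (hcl : ∀ a ∈ q, ¬ Disjoint a.vars s → a.vars ⊆ tr ∪ s) : s = ti :=
  ht.2 _ _ (ht.1.restrict hs hne hcl) hs

theorem IsTW.ti_eq_of_hom_eq (hri : T.ri = ∅) {tr' ti' : Finset V}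
    (ht : IsTW T q ans tr ti) (ht' : IsTW T q ans tr' ti')
    {τ τ' : DLConcept UP BP} {h h' : V → List (DLRole BP)}
    (hh : IsTWHom T q tr ti τ h) (hh' : IsTWHom T q tr' ti' τ' h')
    {y : V} (hy : y ∈ ti) (hy' : y ∈ ti') (hyy : h y = h' y) : ti = ti' := by
  set s := (ti ∩ ti').filter fun v => h v = h' v
  have hmem : ∀ v, v ∈ s ↔ v ∈ ti ∧ v ∈ ti' ∧ h v = h' v := by
    simp [s, and_assoc]
  have hspread :
      ∀ a ∈ q, ¬ Disjoint a.vars s → ∀ v ∈ a.vars, v ∈ s ∨ v ∈ tr ∧ v ∈ tr' := by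
    intro a ha hmeet v hv
    obtain ⟨u, hu, hus⟩ := Finset.not_disjoint_iff.1 hmeet
    obtain ⟨huti, huti', huu⟩ := (hmem u).1 hus
    have haq := ht.1.mem_qtw_of_meets ha hu huti
    have haq' := ht'.1.mem_qtw_of_meets ha hu huti'
    have hhu : h u ≠ [] := (ht.1.mem_ti_iff hh ha hu huti hu).1 huti
    have hvv : h v = h' v := by
      by_cases huv : u = v
      · exact huv ▸ huu
      obtain ⟨ρ, hj⟩ := QAtom.exists_joins hu hv huv
      rw [hh.1.eq_canonSucc hri haq hj (.inl hhu),
        hh'.1.eq_canonSucc hri haq' hj (.inl (huu ▸ hhu)), huu]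
    by_cases hv0 : h v = []
    · exact .inr ⟨(hh.eq_nil_iff haq hv).1 hv0, (hh'.eq_nil_iff haq' hv).1 (hvv ▸ hv0)⟩
    · refine .inl ((hmem v).2 ⟨(ht.1.mem_ti_iff hh ha hu huti hv).2 hv0,
        (ht'.1.mem_ti_iff hh' ha hu huti' hv).2 (hvv ▸ hv0), hvv⟩)
  have hcl :
      ∀ a ∈ q, ¬ Disjoint a.vars s → a.vars ⊆ tr ∪ s ∧ a.vars ⊆ tr' ∪ s := by
    intro a ha hmeet
    constructor <;> intro v hv <;> rcases hspread a ha hmeet v hv with hvs | ⟨hvtr, hvtr'⟩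
    exacts [Finset.mem_union_right _ hvs, Finset.mem_union_left _ hvtr,
      Finset.mem_union_right _ hvs, Finset.mem_union_left _ hvtr']
  have hne : s.Nonempty := ⟨y, (hmem y).2 ⟨hy, hy', hyy⟩⟩
  have hs : s = ti :=
    ht.eq_of_subset (fun v hv => ((hmem v).1 hv).1) hne fun a ha hm => (hcl a ha hm).1
  have hs' : s = ti' :=
    ht'.eq_of_subset (fun v hv => ((hmem v).1 hv).2.1) hne fun a ha hm => (hcl a ha hm).2
  exact hs.symm.trans hs'

theorem IsTW.ti_eq_of_joins (hri : T.ri = ∅) {tr' ti' : Finset V}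
    (ht : IsTW T q ans tr ti) (ht' : IsTW T q ans tr' ti') {a : QAtom UP BP V} (ha : a ∈ q)
    {ρ : DLRole BP} {x y : V} (hj : a.Joins ρ x y) (hx : x ∈ tr) (hx' : x ∈ tr')
    (hy : y ∈ ti) (hy' : y ∈ ti') : ti = ti' := by
  obtain ⟨τ, h, hh⟩ := ht.1.exists_isTWHom
  obtain ⟨τ', h', hh'⟩ := ht'.1.exists_isTWHom
  have haq := ht.1.mem_qtw_of_meets ha hj.mem_vars.2 hy
  have haq' := ht'.1.mem_qtw_of_meets ha hj.mem_vars.2 hy'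
  have hx0 : h x = [] := (hh.eq_nil_iff haq hj.mem_vars.1).2 hx
  have hx0' : h' x = [] := (hh'.eq_nil_iff haq' hj.mem_vars.1).2 hx'
  have hy0 := (ht.1.mem_ti_iff hh ha hj.mem_vars.2 hy hj.mem_vars.2).1 hy
  have hy0' := (ht'.1.mem_ti_iff hh' ha hj.mem_vars.2 hy' hj.mem_vars.2).1 hy'
  refine ht.ti_eq_of_hom_eq hri ht' hh hh' hy hy' ?_
  rw [hh.1.eq_canonSucc hri haq hj (.inr hy0), hh'.1.eq_canonSucc hri haq' hj (.inr hy0'), hx0,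
    hx0']

theorem IsTW.ti_eq_of_detached {ti' : Finset V} (ht : IsTW T q ans ∅ ti)
    (ht' : IsTW T q ans ∅ ti') {a : QAtom UP BP V} (ha : a ∈ q) {u u' : V} (hu : u ∈ a.vars)
    (huti : u ∈ ti) (hu' : u' ∈ a.vars) (huti' : u' ∈ ti') : ti = ti' := by
  have hcl : ∀ b ∈ q, ¬ Disjoint b.vars (ti ∩ ti') → b.vars ⊆ ∅ ∪ ti ∩ ti' := by
    intro b hb hmeet
    obtain ⟨w, hw, hws⟩ := Finset.not_disjoint_iff.1 hmeet
    rw [Finset.mem_inter] at hws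
    have h₁ := ht.1.vars_subset hb hw hws.1
    have h₂ := ht'.1.vars_subset hb hw hws.2
    rw [Finset.empty_union] at h₁ h₂ ⊢
    exact Finset.subset_inter h₁ h₂
  have hne : (ti ∩ ti').Nonempty := by
    have h₂ := ht'.1.vars_subset ha hu' huti'
    exact ⟨u, Finset.mem_inter.2 ⟨huti, by simpa using h₂ hu⟩⟩
  exact (ht.eq_of_subset Finset.inter_subset_left hne hcl).symm.trans
    (ht'.eq_of_subset Finset.inter_subset_right hne hcl)

/-- Tag `(a, some b)`: the atom `a` leads from a root into the witness along a role of
direction `b`; tag `(a, none)`: the witness is detached and meets `a`. -/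
def TWTag (tr ti : Finset V) (a : QAtom UP BP V) : Option Bool → Prop
  | some b => ∃ P x y, a.Joins (P, b) x y ∧ x ∈ tr ∧ y ∈ ti
  | none => tr = ∅ ∧ ¬ Disjoint a.vars ti

theorem IsPreTW.exists_twTag (pre : IsPreTW T q ans tr ti) :
    ∃ a ∈ q, ∃ o, TWTag tr ti a o := by
  obtain ⟨hdisj, ⟨u, hu⟩, -, hq, -, -, -, -, htr, -⟩ := pre
  rcases tr.eq_empty_or_nonempty with rfl | ⟨x, hx⟩
  · obtain ⟨a, ha, hua⟩ := mem_qvars.1 (hq (Finset.mem_union_right _ hu))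
    exact ⟨a, ha, none, rfl, Finset.not_disjoint_iff.2 ⟨u, hua, hu⟩⟩
  obtain ⟨a, ha, hxa⟩ := mem_qvars.1 (htr hx)
  obtain ⟨haq, hsub, hnsub⟩ := mem_qtw.1 ha
  obtain ⟨y, hya, hytr⟩ := Finset.not_subset.1 hnsub
  have hyti : y ∈ ti := by simpa [hytr] using hsub hya
  obtain ⟨⟨P, b⟩, hj⟩ := QAtom.exists_joins hxa hya (by rintro rfl; exact hytr hx)
  exact ⟨a, haq, some b, P, x, y, hj, hx, hyti⟩

theorem IsTW.eq_of_twTag (hri : T.ri = ∅) {tr' ti' : Finset V}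
    (ht : IsTW T q ans tr ti) (ht' : IsTW T q ans tr' ti') {a : QAtom UP BP V} (ha : a ∈ q)
    {o : Option Bool} (hc : TWTag tr ti a o) (hc' : TWTag tr' ti' a o) :
    (tr, ti) = (tr', ti') := by
  suffices hti : ti = ti' by rw [ht.1.eq_twRoots, ht'.1.eq_twRoots, hti]
  cases o with
  | none =>
    obtain ⟨rfl, hmeet⟩ := hc
    obtain ⟨rfl, hmeet'⟩ := hc'
    obtain ⟨u, hu, huti⟩ := Finset.not_disjoint_iff.1 hmeet
    obtain ⟨u', hu', huti'⟩ := Finset.not_disjoint_iff.1 hmeet'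
    exact ht.ti_eq_of_detached ht' ha hu huti hu' huti'
  | some b =>
    obtain ⟨P, x, y, hj, hx, hy⟩ := hc
    obtain ⟨P', x', y', hj', hx', hy'⟩ := hc'
    obtain ⟨rfl, rfl, rfl⟩ := hj.unique hj'
    exact ht.ti_eq_of_joins hri ht' ha hj hx hx' hy hy'

end TreeWitness

/-- For OMQs `Q = (T, q)` in which `T` contains no role-inclusion axioms,
the number of tree witnesses for `Q` is at most `3|q|`. -/
theorem stmt_12 (T : DLOnt ℕ ℕ) (q : Finset (QAtom ℕ ℕ ℕ)) (ans : Finset ℕ)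
    (hri : T.ri = ∅) :
    {p : Finset ℕ × Finset ℕ | IsTW T q ans p.1 p.2}.ncard ≤ 3 * q.card := by
  have htag : ∀ p ∈ {p : Finset ℕ × Finset ℕ | IsTW T q ans p.1 p.2},
      ∃ c ∈ q ×ˢ (Finset.univ : Finset (Option Bool)), TWTag p.1 p.2 c.1 c.2 := by
    intro p hp
    obtain ⟨a, ha, o, hc⟩ := hp.1.exists_twTag
    exact ⟨(a, o), Finset.mem_product.2 ⟨ha, Finset.mem_univ o⟩, hc⟩
  have : Nonempty (QAtom ℕ ℕ ℕ) := ⟨.ua 0 0⟩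
  choose! tag htag_mem htag_spec using htag
  calc {p : Finset ℕ × Finset ℕ | IsTW T q ans p.1 p.2}.ncard
      ≤ (↑(q ×ˢ (Finset.univ : Finset (Option Bool))) : Set _).ncard :=
        Set.ncard_le_ncard_of_injOn tag htag_mem fun p hp p' hp' he =>
          IsTW.eq_of_twTag hri hp hp' (Finset.mem_product.1 (htag_mem p hp)).1 (htag_spec p hp)
            (he ▸ htag_spec p' hp')
    _ = 3 * q.card := by simp [mul_comm]
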